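/- arXiv:1602.07675 — 2 statements merged into one kernel-verified Lean document; each statement's English description precedes it below -/
import Mathlib

section
/- Let G be a finite simple graph with n vertices and largest degree Δ, and let q be an integer with 1 ≤ q ≤ n − Δ − 1. Then η(G ∨ K_q) = max{η(G), q}, where G ∨ K_q is the join of G with the complete graph on q vertices. -/
open Classical in
/-- Sum of the labels `f` over the open neighborhood of `v` in `G`. -/
noncomputable def nbrSum {V : Type*} [Fintype V] (G : SimpleGraph V) (f : V → ℕ) (v : V) : ℕ :=
  ∑ w ∈ Finset.univ.filter (fun w => G.Adj v w), f w

open Classical in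
/-- The degree of `v` in `G`. -/
noncomputable def deg {V : Type*} [Fintype V] (G : SimpleGraph V) (v : V) : ℕ :=
  (Finset.univ.filter (fun w => G.Adj v w)).card

/-- `f : V → {1,…,k}` is an additive `k`-coloring of `G`: labels lie in `{1,…,k}` and
adjacent vertices get distinct open-neighborhood sums. -/
def IsAdditiveColoring {V : Type*} [Fintype V] (G : SimpleGraph V) (k : ℕ) (f : V → ℕ) : Prop :=
  (∀ v, 1 ≤ f v ∧ f v ≤ k) ∧ ∀ u v, G.Adj u v → nbrSum G f u ≠ nbrSum G f v

/-- The additive chromatic number `η(G)`: the least `k` admitting an additive `k`-coloring. -/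
noncomputable def eta {V : Type*} [Fintype V] (G : SimpleGraph V) : ℕ :=
  sInf {k | ∃ f : V → ℕ, IsAdditiveColoring G k f}

/-- The join `G ∨ K_q` of `G` with the complete graph on `q` vertices. -/
def joinK {α : Type*} (G : SimpleGraph α) (q : ℕ) : SimpleGraph (α ⊕ Fin q) where
  Adj x y :=
    match x, y with
    | Sum.inl u, Sum.inl v => G.Adj u v
    | Sum.inr i, Sum.inr j => i ≠ j
    | Sum.inl _, Sum.inr _ => True
    | Sum.inr _, Sum.inl _ => True
  symm := by
    refine ⟨?_⟩
    rintro (u | i) (v | j) h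
    · exact G.adj_symm h
    · trivial
    · trivial
    · exact Ne.symm h
  loopless := by
    refine ⟨?_⟩
    rintro (u | i) h
    · exact G.irrefl h
    · exact h rfl

/-!
Each clique vertex of `G ∨ K_q` sees every label except its own, so its neighbourhood sum is the
total label sum minus its label: the clique labels are pairwise distinct, forcing `q` colours, and
restricting to `G` shows `η(G) ≤ η(G ∨ K_q)`. Conversely, label `G` optimally and the clique by
`1, …, q`. A vertex `u` of `G` misses at least `n - deg u ≥ q + 1` positive labels, while a clique
vertex misses only its own label, at most `q`; so no vertex of `G` has the sum of a clique vertex. Some additive colouring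
always exists (labels `2 ^ i` make a neighbourhood sum encode the neighbourhood), so `η` is
attained.
-/

section joinK

variable {α : Type*} (G : SimpleGraph α) (q : ℕ)

@[simp] lemma joinK_adj_inl_inl (u v : α) : (joinK G q).Adj (.inl u) (.inl v) ↔ G.Adj u v := Iff.rfl
@[simp] lemma joinK_adj_inr_inr (i j : Fin q) : (joinK G q).Adj (.inr i) (.inr j) ↔ i ≠ j := Iff.rfl
@[simp] lemma joinK_adj_inl_inr (u : α) (j : Fin q) : (joinK G q).Adj (.inl u) (.inr j) := trivial
@[simp] lemma joinK_adj_inr_inl (i : Fin q) (v : α) : (joinK G q).Adj (.inr i) (.inl v) := trivial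

end joinK

section

open Finset

variable {α : Type*} [Fintype α]

open Classical in
lemma nbrSum_eq_sum_ite (G : SimpleGraph α) (f : α → ℕ) (v : α) :
    nbrSum G f v = ∑ w, if G.Adj v w then f w else 0 := by
  rw [nbrSum, sum_filter]

lemma nbrSum_add_card_sub_deg_le (G : SimpleGraph α) {f : α → ℕ} (hf : ∀ v, 1 ≤ f v) (u : α) :
    nbrSum G f u + (Fintype.card α - deg G u) ≤ ∑ v, f v := by
  classical
  have hcard : Fintype.card α - deg G u = #{w | ¬G.Adj u w} := by
    rw [deg, ← card_univ, ← card_filter_add_card_filter_not (s := univ) fun w => G.Adj u w]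
    omega
  calc nbrSum G f u + (Fintype.card α - deg G u)
      = nbrSum G f u + #{w | ¬G.Adj u w} := by rw [hcard]
    _ ≤ nbrSum G f u + ∑ w with ¬G.Adj u w, f w := by
      gcongr
      simpa using card_nsmul_le_sum _ f 1 fun w _ => hf w
    _ = ∑ v, f v := sum_filter_add_sum_filter_not _ _ _

lemma nbrSum_joinK_inl (G : SimpleGraph α) (q : ℕ) (f : α ⊕ Fin q → ℕ) (u : α) :
    nbrSum (joinK G q) f (.inl u) = nbrSum G (f ∘ Sum.inl) u + ∑ j, f (.inr j) := by
  simp [nbrSum_eq_sum_ite, Fintype.sum_sum_type]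
  rfl

lemma nbrSum_joinK_inr_add (G : SimpleGraph α) (q : ℕ) (f : α ⊕ Fin q → ℕ) (i : Fin q) :
    nbrSum (joinK G q) f (.inr i) + f (.inr i) = ∑ x, f x := by
  classical
  have hnbr : ({x | (joinK G q).Adj (.inr i) x} : Finset _) = univ.erase (Sum.inr i) := by
    ext (v | j) <;> simp [eq_comm]
  rw [nbrSum, hnbr, sum_erase_add _ _ (mem_univ _)]

lemma isAdditiveColoring_two_pow {n : ℕ} (G : SimpleGraph α) (e : α ≃ Fin n) :
    IsAdditiveColoring G (2 ^ n) fun v => 2 ^ (e v : ℕ) := by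
  classical
  refine ⟨fun v => ⟨Nat.one_le_two_pow, Nat.pow_le_pow_right two_pos (e v).isLt.le⟩, ?_⟩
  intro u v huv hsum
  let emb : α ↪ ℕ := e.toEmbedding.trans Fin.valEmbedding
  have hnbr : ∀ w, nbrSum G (fun v => 2 ^ (e v : ℕ)) w
      = ∑ i ∈ ({x | G.Adj w x} : Finset α).map emb, 2 ^ i :=
    fun w => by rw [nbrSum, sum_map]; rfl
  rw [hnbr, hnbr] at hsum
  have hsame := map_injective emb (geomSum_injective le_rfl hsum)
  have hv : v ∈ ({x | G.Adj u x} : Finset α) := by simpa using huv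
  rw [hsame] at hv
  simp at hv

lemma exists_isAdditiveColoring_eta (G : SimpleGraph α) : ∃ f, IsAdditiveColoring G (eta G) f :=
  Nat.sInf_mem (s := {k | ∃ f : α → ℕ, IsAdditiveColoring G k f})
    ⟨_, _, isAdditiveColoring_two_pow G (Fintype.equivFin α)⟩

lemma eta_le {G : SimpleGraph α} {k : ℕ} {f : α → ℕ} (hf : IsAdditiveColoring G k f) :
    eta G ≤ k :=
  Nat.sInf_le ⟨f, hf⟩

namespace IsAdditiveColoring

variable {G : SimpleGraph α} {q k : ℕ}

lemma comp_inl {f : α ⊕ Fin q → ℕ} (hf : IsAdditiveColoring (joinK G q) k f) :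
    IsAdditiveColoring G k (f ∘ Sum.inl) := by
  refine ⟨fun v => hf.1 (.inl v), fun u v huv hsum => hf.2 (.inl u) (.inl v) huv ?_⟩
  rw [nbrSum_joinK_inl, nbrSum_joinK_inl, hsum]

lemma injective_comp_inr {f : α ⊕ Fin q → ℕ} (hf : IsAdditiveColoring (joinK G q) k f) :
    Function.Injective (f ∘ Sum.inr) := by
  intro i j hij
  by_contra hne
  refine hf.2 (.inr i) (.inr j) hne ?_
  have hi := nbrSum_joinK_inr_add G q f i
  have hj := nbrSum_joinK_inr_add G q f j
  simp only [Function.comp_apply] at hij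
  omega

lemma le_of_joinK {f : α ⊕ Fin q → ℕ} (hf : IsAdditiveColoring (joinK G q) k f) : q ≤ k := by
  have hmaps : Set.MapsTo (f ∘ Sum.inr) (univ : Finset (Fin q)) (Icc 1 k) :=
    fun i _ => mem_Icc.2 (hf.1 (.inr i))
  simpa using card_le_card_of_injOn _ hmaps hf.injective_comp_inr.injOn

lemma joinK_sumElim {f : α → ℕ} (hf : IsAdditiveColoring G k f)
    (hdeg : ∀ u, q + deg G u < Fintype.card α) :
    IsAdditiveColoring (joinK G q) (max k q) (Sum.elim f fun i => (i : ℕ) + 1) := by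
  set F : α ⊕ Fin q → ℕ := Sum.elim f fun i => (i : ℕ) + 1
  have htotal : ∑ x, F x = ∑ v, f v + ∑ j : Fin q, ((j : ℕ) + 1) := Fintype.sum_sum_type F
  have hinl : ∀ u, nbrSum (joinK G q) F (.inl u) = nbrSum G f u + ∑ j : Fin q, ((j : ℕ) + 1) :=
    nbrSum_joinK_inl G q F
  have hinr : ∀ i : Fin q, nbrSum (joinK G q) F (.inr i) + ((i : ℕ) + 1) = ∑ x, F x :=
    nbrSum_joinK_inr_add G q F
  have hlt : ∀ u (i : Fin q), nbrSum (joinK G q) F (.inl u) < nbrSum (joinK G q) F (.inr i) := by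
    intro u i
    have hgap := nbrSum_add_card_sub_deg_le G (fun v => (hf.1 v).1) u
    have := hdeg u
    have := hinl u
    have := hinr i
    have := i.isLt
    omega
  refine ⟨?_, ?_⟩
  · rintro (v | i)
    · exact ⟨(hf.1 v).1, (hf.1 v).2.trans (le_max_left k q)⟩
    · exact ⟨Nat.le_add_left 1 i, i.isLt.trans_le (le_max_right k q)⟩
  · rintro (u | i) (v | j) hadj hsum
    · exact hf.2 u v hadj (by rw [hinl, hinl] at hsum; omega)
    · exact (hlt u j).ne hsum
    · exact (hlt v i).ne' hsum
    · have := hinr i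
      have := hinr j
      exact hadj (Fin.ext (by omega))

end IsAdditiveColoring

end

theorem eta_join_complete_general {α : Type*} [Fintype α] (G : SimpleGraph α) (q Δ : ℕ)
    (hΔub : ∀ v, deg G v ≤ Δ)
    (hqn : q + Δ + 1 ≤ Fintype.card α) :
    eta (joinK G q) = max (eta G) q := by
  obtain ⟨f, hf⟩ := exists_isAdditiveColoring_eta G
  obtain ⟨g, hg⟩ := exists_isAdditiveColoring_eta (joinK G q)
  have hdeg : ∀ u, q + deg G u < Fintype.card α := fun u => by have := hΔub u; omega
  exact le_antisymm (eta_le (hf.joinK_sumElim hdeg)) (max_le (eta_le hg.comp_inl) hg.le_of_joinK)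

/-- If `Δ` is the largest degree of `G` and `1 ≤ q ≤ n - Δ - 1`, then
`η(G ∨ K_q) = max(η(G), q)`. -/
theorem eta_join_complete {α : Type*} [Fintype α] (G : SimpleGraph α) (q Δ : ℕ)
    (hΔub : ∀ v, deg G v ≤ Δ) (hΔmem : ∃ v, deg G v = Δ)
    (hq : 1 ≤ q) (hqn : q + Δ + 1 ≤ Fintype.card α) :
    eta (joinK G q) = max (eta G) q :=
  eta_join_complete_general G q Δ hΔub hqn
end

section
/- Let n ≥ 4 and let C_n be the cycle on n vertices. If n is even, then η(C_n) = 2; if n is odd, then η(C_n) = 3. -/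
/-!
A cycle is 2-regular, so constant labels give constant neighbourhood sums and `η ≥ 2`; on an
even cycle, labelling the two colour classes of a proper 2-colouring by 2 and 1 gives
neighbourhood sums 2 and 4. On an odd cycle, an additive labelling `f` with values in `{1, 2}`
would make `v ↦ [f v + 2 ≤ f (v - 1) + f (v + 1)]` a proper 2-colouring: for labels in `{1, 2}`,
the inequality of the neighbourhood sums of `u` and `u + 1` forces this bit to flip. The labelling
`2, 3, 1, 3, 1, …, 3, 1` of an odd cycle has neighbourhood sums `4, 3, 6, 2, …, 6, 2, 5`.
-/

open SimpleGraph Finset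

section General

variable {V : Type*} [Fintype V] {G : SimpleGraph V} {k : ℕ} {f : V → ℕ}

lemma nbrSum_eq_sum_neighborFinset [DecidableRel G.Adj] (f : V → ℕ) (v : V) :
    nbrSum G f v = ∑ w ∈ G.neighborFinset v, f w := by
  rw [nbrSum, neighborFinset_eq_filter]
  congr

lemma nbrSum_eq_degree_mul [DecidableRel G.Adj] {v : V} {a : ℕ}
    (h : ∀ w, G.Adj v w → f w = a) : nbrSum G f v = G.degree v * a := by
  rw [nbrSum_eq_sum_neighborFinset,
    sum_congr rfl fun w hw => h w ((mem_neighborFinset G v w).1 hw), sum_const,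
    card_neighborFinset_eq_degree, smul_eq_mul]

lemma IsAdditiveColoring.mono {l : ℕ} (hf : IsAdditiveColoring G k f) (hkl : k ≤ l) :
    IsAdditiveColoring G l f :=
  ⟨fun v => ⟨(hf.1 v).1, (hf.1 v).2.trans hkl⟩, hf.2⟩

lemma IsAdditiveColoring.two_le [DecidableRel G.Adj] {d : ℕ} (hG : G.IsRegularOfDegree d)
    {u v : V} (huv : G.Adj u v) (hf : IsAdditiveColoring G k f) : 2 ≤ k := by
  by_contra! hk
  have hone : ∀ w, f w = 1 := fun w => by have := hf.1 w; omega
  have hsum : ∀ w, nbrSum G f w = d := fun w => by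
    rw [nbrSum_eq_degree_mul fun x _ => hone x, hG w, mul_one]
  exact hf.2 u v huv (by rw [hsum, hsum])

lemma isAdditiveColoring_of_coloring [DecidableRel G.Adj] {d : ℕ} (hG : G.IsRegularOfDegree d)
    (hd : 0 < d) (c : G.Coloring Bool) :
    IsAdditiveColoring G 2 fun v => if c v then 2 else 1 := by
  have hsum : ∀ v, nbrSum G (fun v => if c v then 2 else 1) v = if c v then d else 2 * d := by
    intro v
    rw [nbrSum_eq_degree_mul (a := if c v then 1 else 2) fun w hw => ?_, hG v]
    · split_ifs <;> ring
    · have := c.valid hw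
      revert this
      cases c v <;> cases c w <;> simp
  refine ⟨fun v => by dsimp only; split_ifs <;> simp, fun u v huv => ?_⟩
  have := c.valid huv
  rw [hsum, hsum]
  revert this
  cases c u <;> cases c v <;> simp <;> omega

lemma eta_eq_of_isAdditiveColoring (hf : IsAdditiveColoring G k f)
    (hle : ∀ l g, IsAdditiveColoring G l g → k ≤ l) : eta G = k :=
  IsLeast.csInf_eq ⟨⟨f, hf⟩, fun _ ⟨g, hg⟩ => hle _ g hg⟩

end General

section Cycle

variable {n k : ℕ} {f : Fin (n + 3) → ℕ}

lemma cycleGraph_adj_iff_eq_add_one {u v : Fin (n + 2)} :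
    (cycleGraph (n + 2)).Adj u v ↔ v = u + 1 ∨ u = v + 1 := by
  rw [cycleGraph_adj, sub_eq_iff_eq_add', sub_eq_iff_eq_add', or_comm]

lemma nbrSum_cycleGraph (f : Fin (n + 3) → ℕ) (v : Fin (n + 3)) :
    nbrSum (cycleGraph (n + 3)) f v = f (v - 1) + f (v + 1) := by
  have hne : v - 1 ≠ v + 1 :=
    card_pair_eq_two_iff.1 (cycleGraph_degree_two_le.symm.trans cycleGraph_degree_three_le)
  rw [nbrSum_eq_sum_neighborFinset, cycleGraph_neighborFinset, sum_pair hne]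

lemma nbrSum_cycleGraph_add_one (f : Fin (n + 3) → ℕ) (u : Fin (n + 3)) :
    nbrSum (cycleGraph (n + 3)) f (u + 1) = f u + f (u + 1 + 1) := by
  rw [nbrSum_cycleGraph, add_sub_cancel_right]

lemma isAdditiveColoring_cycleGraph_iff :
    IsAdditiveColoring (cycleGraph (n + 3)) k f ↔ (∀ v, 1 ≤ f v ∧ f v ≤ k) ∧
      ∀ u, f (u - 1) + f (u + 1) ≠ f u + f (u + 1 + 1) := by
  refine and_congr_right fun _ => ⟨fun h u => ?_, fun h u v huv => ?_⟩
  · rw [← nbrSum_cycleGraph, ← nbrSum_cycleGraph_add_one]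
    exact h u (u + 1) (cycleGraph_adj_iff_eq_add_one.2 (Or.inl rfl))
  · rcases cycleGraph_adj_iff_eq_add_one.1 huv with rfl | rfl
    · rw [nbrSum_cycleGraph, nbrSum_cycleGraph_add_one]
      exact h u
    · rw [nbrSum_cycleGraph_add_one, nbrSum_cycleGraph]
      exact (h v).symm

lemma IsAdditiveColoring.cycleGraph_colorable_two
    (hf : IsAdditiveColoring (cycleGraph (n + 3)) 2 f) : (cycleGraph (n + 3)).Colorable 2 := by
  obtain ⟨hbound, hkey⟩ := isAdditiveColoring_cycleGraph_iff.1 hf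
  let c : (cycleGraph (n + 3)).Coloring Bool :=
    Coloring.mk (fun v => f v + 2 ≤ nbrSum (cycleGraph (n + 3)) f v) fun {u v} huv => by
      have hflip : ∀ u, f u + 2 ≤ nbrSum (cycleGraph (n + 3)) f u ↔
          ¬f (u + 1) + 2 ≤ nbrSum (cycleGraph (n + 3)) f (u + 1) := fun u => by
        rw [nbrSum_cycleGraph, nbrSum_cycleGraph_add_one]
        have := hbound (u - 1)
        have := hbound (u + 1 + 1)
        have := hkey u
        omega
      rcases cycleGraph_adj_iff_eq_add_one.1 huv with rfl | rfl
      · simpa only [ne_eq, decide_eq_decide, hflip u] using not_iff_self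
      · simpa only [ne_eq, decide_eq_decide, hflip v] using iff_not_self
  simpa using c.colorable

lemma IsAdditiveColoring.three_le_of_odd (hn : Odd (n + 3))
    (hf : IsAdditiveColoring (cycleGraph (n + 3)) k f) : 3 ≤ k := by
  by_contra! hk
  have hle := (hf.mono (Nat.le_of_lt_succ hk)).cycleGraph_colorable_two.chromaticNumber_le
  rw [chromaticNumber_cycleGraph_of_odd _ (by omega) hn] at hle
  exact absurd hle (by decide)

lemma isAdditiveColoring_cycleGraph_of_odd (hn : Odd (n + 3)) :
    IsAdditiveColoring (cycleGraph (n + 3)) 3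
      fun v => if v.val = 0 then 2 else if Even v.val then 1 else 3 := by
  refine isAdditiveColoring_cycleGraph_iff.2 ⟨fun v => by split_ifs <;> omega, fun u => ?_⟩
  have hb : (u - 1).val = if u.val = 0 then n + 2 else u.val - 1 := by
    simp only [Fin.coe_sub_one, Fin.ext_iff, Fin.val_zero]
  have hc : (u + 1).val = if u.val = n + 2 then 0 else u.val + 1 := by
    simp only [Fin.val_add_one, Fin.ext_iff, Fin.val_last]
  have hd : (u + 1 + 1).val =
      if u.val = n + 1 then 0 else if u.val = n + 2 then 1 else u.val + 2 := by
    simp only [Fin.val_add_one, Fin.ext_iff, Fin.val_last]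
    split_ifs <;> omega
  have := Nat.odd_iff.1 hn
  have := u.isLt
  simp only [Nat.even_iff]
  split_ifs at hb hc hd <;> split_ifs <;> omega

end Cycle

/-- For `n ≥ 4`: `η(C_n) = 2` if `n` is even, and `η(C_n) = 3` if `n` is odd. -/
theorem eta_cycle (n : ℕ) (hn : 4 ≤ n) :
    (Even n → eta (SimpleGraph.cycleGraph n) = 2) ∧
    (Odd n → eta (SimpleGraph.cycleGraph n) = 3) := by
  obtain ⟨m, rfl⟩ : ∃ m, n = m + 3 := ⟨n - 3, by omega⟩
  have hreg : (cycleGraph (m + 3)).IsRegularOfDegree 2 := fun _ => cycleGraph_degree_three_le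
  refine ⟨fun heven => ?_, fun hodd => ?_⟩
  · have hadj : (cycleGraph (m + 3)).Adj 0 (0 + 1) := cycleGraph_adj_iff_eq_add_one.2 (Or.inl rfl)
    exact eta_eq_of_isAdditiveColoring
      (isAdditiveColoring_of_coloring hreg two_pos (cycleGraph.bicoloring_of_even _ heven))
      fun _ _ hg => hg.two_le hreg hadj
  · exact eta_eq_of_isAdditiveColoring (isAdditiveColoring_cycleGraph_of_odd hodd)
      fun _ _ hg => hg.three_le_of_odd hodd
end
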